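/- arXiv:1501.06157 — 2 statements merged into one kernel-verified Lean document; each statement's English description precedes it below -/
import Mathlib

section
/- Let m0 ≥ 2, m1 ≥ m0, and let r solve the (m0,m1)-ODE r'' = α·r' - β·sin(2r) with lim_{x→∞} r(x) = (2ℓ+1)·π/2 for some integer ℓ and lim_{x→∞} r'(x) = 0. Then |r'(x)| ≤ √m1 for all x ≥ Z_β, where Z_β is the unique zero of β. -/
open Filter

noncomputable def artanh (x : ℝ) : ℝ := (1/2) * Real.log ((1 + x) / (1 - x))

/-!
Along a solution of `r'' = α r' - β sin (2r)` the energy `W = r'² / 2 + β sin² r` has derivative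
`α r'² + β' sin² r`, which is nonnegative wherever `α ≥ 0`, since `β' = (m0 + m1) / (4 cosh²) > 0`.
Beyond `Z_β` both `α` and `β` are nonnegative, so `W` is nondecreasing there and
`r'(x)² / 2 ≤ W(x) ≤ W(z) ≤ r'(z)² / 2 + m1 / 2` for all `z ≥ x`, because `β < m1 / 2`.
Letting `z → ∞` and using `r' → 0` gives `r'(x)² ≤ m1`.
-/

open Set

theorem Real.monotone_tanh : Monotone Real.tanh := fun a b hab => by
  have hmem : ∀ t, Real.tanh t ∈ Ioo (-1) 1 := fun t => ⟨neg_one_lt_tanh t, tanh_lt_one t⟩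
  rwa [← artanh_le_artanh_iff (hmem a) (hmem b), artanh_tanh, artanh_tanh]

theorem Real.hasDerivAt_tanh (x : ℝ) : HasDerivAt Real.tanh (cosh x ^ 2)⁻¹ x := by
  rw [show Real.tanh = sinh / cosh from funext tanh_eq_sinh_div_cosh]
  refine ((hasDerivAt_sinh x).div (hasDerivAt_cosh x) (cosh_pos x).ne').congr_deriv ?_
  rw [← sq, ← sq, cosh_sq_sub_sinh_sq, one_div]

theorem artanh_eq_real_artanh {y : ℝ} (hy : y ∈ Icc (-1) 1) : artanh y = Real.artanh y :=
  (Real.artanh_eq_half_log hy).symm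

theorem le_tanh_of_artanh_le {y x : ℝ} (hy : y ∈ Ioo (-1) 1) (h : artanh y ≤ x) :
    y ≤ Real.tanh x := by
  rw [artanh_eq_real_artanh (Ioo_subset_Icc_self hy)] at h
  simpa only [Real.tanh_artanh hy] using Real.monotone_tanh h

theorem sub_le_add_mul_tanh {p q x : ℝ} (hp : 0 < p) (hq : 0 < q)
    (hx : artanh ((p - q) / (p + q)) ≤ x) : p - q ≤ (p + q) * Real.tanh x := by
  have hpq : 0 < p + q := add_pos hp hq
  have hmem : (p - q) / (p + q) ∈ Ioo (-1) 1 := by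
    constructor
    · rw [lt_div_iff₀ hpq]; linarith
    · rw [div_lt_one hpq]; linarith
  rw [← div_le_iff₀' hpq]
  exact le_tanh_of_artanh_le hmem hx

section Energy

open Real

variable {a b b' r r' : ℝ → ℝ}

noncomputable def energy (b r r' : ℝ → ℝ) (x : ℝ) : ℝ := r' x ^ 2 / 2 + b x * sin (r x) ^ 2

theorem hasDerivAt_energy {x : ℝ} (hr : HasDerivAt r (r' x) x)
    (hr' : HasDerivAt r' (a x * r' x - b x * sin (2 * r x)) x) (hb : HasDerivAt b (b' x) x) :
    HasDerivAt (energy b r r') (a x * r' x ^ 2 + b' x * sin (r x) ^ 2) x := by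
  have hsin : HasDerivAt (fun t => sin (r t) ^ 2) (2 * sin (r x) ^ 1 * (cos (r x) * r' x)) x :=
    ((hasDerivAt_sin (r x)).comp x hr).pow 2
  refine ((hr'.pow 2).div_const 2 |>.add (hb.mul hsin)).congr_deriv ?_
  rw [sin_two_mul]
  ring

theorem monotoneOn_energy {z : ℝ} (hr : ∀ x, HasDerivAt r (r' x) x)
    (hr' : ∀ x, HasDerivAt r' (a x * r' x - b x * sin (2 * r x)) x)
    (hb : ∀ x, HasDerivAt b (b' x) x) (ha0 : ∀ x ∈ Ioi z, 0 ≤ a x)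
    (hb'0 : ∀ x ∈ Ioi z, 0 ≤ b' x) :
    MonotoneOn (energy b r r') (Ici z) := by
  have hW x := hasDerivAt_energy (hr x) (hr' x) (hb x)
  refine monotoneOn_of_hasDerivWithinAt_nonneg (convex_Ici z)
    (fun x _ => (hW x).continuousAt.continuousWithinAt)
    (fun x _ => (hW x).hasDerivWithinAt) fun x hx => ?_
  rw [interior_Ici] at hx
  have := ha0 x hx
  have := hb'0 x hx
  positivity

theorem sq_le_two_mul_energy {x : ℝ} (hb : 0 ≤ b x) : r' x ^ 2 ≤ 2 * energy b r r' x := by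
  have := mul_nonneg hb (sq_nonneg (sin (r x)))
  rw [energy]
  linarith

theorem energy_le_of_monotoneOn {z M : ℝ} (hmono : MonotoneOn (energy b r r') (Ici z))
    (hb0 : ∀ x ∈ Ici z, 0 ≤ b x) (hbM : ∀ x ∈ Ici z, b x ≤ M)
    (hr' : Tendsto r' atTop (nhds 0)) {x : ℝ} (hx : z ≤ x) :
    energy b r r' x ≤ M := by
  have hlim : Tendsto (fun y => r' y ^ 2 / 2 + M) atTop (nhds M) := by
    simpa using (hr'.pow 2).div_const 2 |>.add_const M
  refine ge_of_tendsto hlim ?_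
  filter_upwards [eventually_ge_atTop x] with y hy
  have hy' : y ∈ Ici z := le_trans hx hy
  calc energy b r r' x ≤ energy b r r' y := hmono hx hy' hy
    _ ≤ r' y ^ 2 / 2 + M := by
      have := mul_le_of_le_one_right (hb0 y hy') (sin_sq_le_one (r y))
      rw [energy]
      linarith [hbM y hy']

end Energy

theorem deriv_bound_right_of_Zbeta_general (m0 m1 : ℕ) (hm0 : 2 ≤ m0) (hm1 : m0 ≤ m1)
    (α β : ℝ → ℝ)
    (hα : ∀ x, α x = (1/2) * (((m0:ℝ) + m1 - 2) * Real.tanh x + m1 - m0))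
    (hβ : ∀ x, β x = (1/4) * (((m0:ℝ) + m1) * Real.tanh x + m1 - m0))
    (r r' : ℝ → ℝ)
    (hr : ∀ x, HasDerivAt r (r' x) x)
    (hr' : ∀ x, HasDerivAt r' (α x * r' x - β x * Real.sin (2 * r x)) x)
    (hlim' : Tendsto r' atTop (nhds 0)) :
    ∀ x : ℝ, artanh (((m0:ℝ) - m1) / ((m0:ℝ) + m1)) ≤ x →
      |r' x| ≤ Real.sqrt m1 := by
  intro x hx
  set Z := artanh (((m0:ℝ) - m1) / ((m0:ℝ) + m1))
  have hm0' : (2 : ℝ) ≤ m0 := by exact_mod_cast hm0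
  have hm1' : (m0 : ℝ) ≤ m1 := by exact_mod_cast hm1
  have hZ : ∀ z ∈ Ici Z, (m0:ℝ) - m1 ≤ (m0 + m1) * Real.tanh z := fun z hz =>
    sub_le_add_mul_tanh (by linarith) (by linarith) hz
  have hβ0 : ∀ z ∈ Ici Z, 0 ≤ β z := fun z hz => by
    rw [hβ]
    linarith [hZ z hz]
  have hα0 : ∀ z ∈ Ioi Z, 0 ≤ α z := fun z hz => by
    rw [hα]
    have := hZ z (Ioi_subset_Ici_self hz)
    rcases le_total 0 (Real.tanh z) with ht | ht <;> nlinarith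
  have hβM : ∀ z ∈ Ici Z, β z ≤ m1 / 2 := fun z _ => by
    rw [hβ]
    nlinarith [Real.tanh_lt_one z]
  have hβ' z : HasDerivAt β ((m0 + m1) / 4 * (Real.cosh z ^ 2)⁻¹) z := by
    rw [funext hβ]
    refine ((((Real.hasDerivAt_tanh z).const_mul ((m0:ℝ) + m1)).add_const (m1:ℝ)).sub_const
      (m0:ℝ) |>.const_mul (1 / 4 : ℝ)).congr_deriv ?_
    ring
  have hmono := monotoneOn_energy hr hr' hβ' hα0 fun z _ => by positivity
  have hW := energy_le_of_monotoneOn hmono hβ0 hβM hlim' hx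
  exact Real.abs_le_sqrt (by linarith [sq_le_two_mul_energy (r := r) (r' := r') (hβ0 x hx)])

/-- If r solves the (m0,m1)-ODE with r(x) → (2ℓ+1)π/2 and r'(x) → 0 as x → ∞,
then |r'(x)| ≤ √m1 for all x ≥ Z_β, the unique zero of β. -/
theorem deriv_bound_right_of_Zbeta (m0 m1 : ℕ) (hm0 : 2 ≤ m0) (hm1 : m0 ≤ m1)
    (α β : ℝ → ℝ)
    (hα : ∀ x, α x = (1/2) * (((m0:ℝ) + m1 - 2) * Real.tanh x + m1 - m0))
    (hβ : ∀ x, β x = (1/4) * (((m0:ℝ) + m1) * Real.tanh x + m1 - m0))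
    (r r' : ℝ → ℝ)
    (hr : ∀ x, HasDerivAt r (r' x) x)
    (hr' : ∀ x, HasDerivAt r' (α x * r' x - β x * Real.sin (2 * r x)) x)
    (ℓ : ℤ)
    (hlim : Tendsto r atTop (nhds ((2 * (ℓ:ℝ) + 1) * Real.pi / 2)))
    (hlim' : Tendsto r' atTop (nhds 0)) :
    ∀ x : ℝ, artanh (((m0:ℝ) - m1) / ((m0:ℝ) + m1)) ≤ x →
      |r' x| ≤ Real.sqrt m1 :=
  deriv_bound_right_of_Zbeta_general m0 m1 hm0 hm1 α β hα hβ r r' hr hr' hlim'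
end

section
/- Let m0 ≥ 1, m1 ≥ 1 and let r solve the (m0,m1)-ODE. Define V(x) = (1/2)·r'(x)² - β(x)·cos²(r(x)). Then V'(x) = α(x)·r'(x)² - ((m0+m1)/(4·cosh²x))·cos²(r(x)); in particular V is monotone nonincreasing on (-∞, Z_α] when m0 ≥ 2, where Z_α is the unique zero of α. -/
theorem Real.hasDerivAt_tanh_s12 (x : ℝ) : HasDerivAt Real.tanh (1 / Real.cosh x ^ 2) x := by
  rw [show Real.tanh = Real.sinh / Real.cosh from funext Real.tanh_eq_sinh_div_cosh]
  refine ((Real.hasDerivAt_sinh x).div (Real.hasDerivAt_cosh x)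
    (Real.cosh_pos x).ne').congr_deriv ?_
  rw [← Real.cosh_sq_sub_sinh_sq x]
  ring

theorem hasDerivAt_mul_tanh_add (p q x : ℝ) :
    HasDerivAt (fun y => p * Real.tanh y + q) (p / Real.cosh x ^ 2) x := by
  refine (((Real.hasDerivAt_tanh_s12 x).const_mul p).add_const q).congr_deriv ?_
  ring

theorem artanh_eq_real_artanh_s12 {t : ℝ} (ht : t ∈ Set.Icc (-1) 1) : artanh t = Real.artanh t :=
  (Real.artanh_eq_half_log ht).symm

theorem tanh_le_of_le_artanh {t x : ℝ} (ht : t ∈ Set.Ioo (-1) 1) (hx : x ≤ artanh t) :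
    Real.tanh x ≤ t := by
  rw [artanh_eq_real_artanh_s12 (Set.Ioo_subset_Icc_self ht), ← Real.artanh_tanh x] at hx
  exact (Real.artanh_le_artanh_iff ⟨Real.neg_one_lt_tanh x, Real.tanh_lt_one x⟩ ht).1 hx

theorem mul_tanh_le_of_le_artanh {c d x : ℝ} (hc : 0 ≤ c) (hdc : -c < d)
    (hx : x ≤ artanh (d / c)) : c * Real.tanh x ≤ d := by
  rcases le_or_gt c d with hcd | hdc'
  · -- `d / c ∉ (-1, 1)`: the bound holds for all `x`, whatever the junk value of `artanh`.
    nlinarith [Real.tanh_lt_one x]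
  · have hc_pos : 0 < c := by linarith
    have ht : d / c ∈ Set.Ioo (-1) 1 :=
      ⟨by rw [lt_div_iff₀ hc_pos]; linarith, by rw [div_lt_one hc_pos]; exact hdc'⟩
    calc c * Real.tanh x ≤ c * (d / c) := by gcongr; exact tanh_le_of_le_artanh ht hx
      _ = d := mul_div_cancel₀ d hc_pos.ne'

/-- The forcing term `-β sin (2r)` is `-∂ᵣ (β cos² r)`, so only the explicit dependence
of `β` on `x` survives in `V'`. -/
theorem hasDerivAt_lyapunov {α β r r' : ℝ → ℝ} {x b' : ℝ} (hβ : HasDerivAt β b' x)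
    (hr : HasDerivAt r (r' x) x)
    (hr' : HasDerivAt r' (α x * r' x - β x * Real.sin (2 * r x)) x) :
    HasDerivAt (fun y => (1/2) * (r' y)^2 - β y * (Real.cos (r y))^2)
      (α x * (r' x)^2 - b' * (Real.cos (r x))^2) x := by
  have hsq : HasDerivAt (fun y => (1/2) * (r' y)^2)
      ((1/2) * (2 * r' x ^ 1 * (α x * r' x - β x * Real.sin (2 * r x)))) x :=
    (hr'.pow 2).const_mul (1/2)
  have hcos : HasDerivAt (fun y => (Real.cos (r y))^2)
      (2 * Real.cos (r x) ^ 1 * (-Real.sin (r x) * r' x)) x :=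
    ((Real.hasDerivAt_cos (r x)).comp x hr).pow 2
  refine (hsq.sub (hβ.mul hcos)).congr_deriv ?_
  rw [Real.sin_two_mul]
  ring

theorem lyapunov_V_deriv_and_antitone_general (m0 m1 : ℕ)
    (α β : ℝ → ℝ)
    (hα : ∀ x, α x = (1/2) * (((m0:ℝ) + m1 - 2) * Real.tanh x + m1 - m0))
    (hβ : ∀ x, β x = (1/4) * (((m0:ℝ) + m1) * Real.tanh x + m1 - m0))
    (r r' : ℝ → ℝ)
    (hr : ∀ x, HasDerivAt r (r' x) x)
    (hr' : ∀ x, HasDerivAt r' (α x * r' x - β x * Real.sin (2 * r x)) x) :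
    (∀ x, HasDerivAt (fun y => (1/2) * (r' y)^2 - β y * (Real.cos (r y))^2)
      (α x * (r' x)^2 - (((m0:ℝ) + m1) / (4 * (Real.cosh x)^2)) * (Real.cos (r x))^2) x) ∧
    (2 ≤ m0 → AntitoneOn (fun y => (1/2) * (r' y)^2 - β y * (Real.cos (r y))^2)
      (Set.Iic (artanh (((m0:ℝ) - m1) / ((m0:ℝ) + m1 - 2))))) := by
  have hβ_eq : β = fun y => ((m0:ℝ) + m1) / 4 * Real.tanh y + ((m1:ℝ) - m0) / 4 :=
    funext fun y => by rw [hβ]; ring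
  have hβ' (x : ℝ) : HasDerivAt β (((m0:ℝ) + m1) / (4 * Real.cosh x ^ 2)) x := by
    rw [hβ_eq]
    convert hasDerivAt_mul_tanh_add _ _ x using 1
    ring
  have hV (x : ℝ) := hasDerivAt_lyapunov (hβ' x) (hr x) (hr' x)
  refine ⟨hV, fun hm0 => ?_⟩
  have hm0' : (2:ℝ) ≤ m0 := by exact_mod_cast hm0
  have hα_nonpos (x : ℝ) (hx : x ≤ artanh (((m0:ℝ) - m1) / ((m0:ℝ) + m1 - 2))) : α x ≤ 0 := by
    have h_tanh := mul_tanh_le_of_le_artanh (by linarith [m1.cast_nonneg (α := ℝ)])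
      (by linarith) hx
    rw [hα]
    linarith
  refine antitoneOn_of_hasDerivWithinAt_nonpos (convex_Iic _)
    (fun x _ => (hV x).continuousAt.continuousWithinAt) (fun x _ => (hV x).hasDerivWithinAt)
    fun x hx => ?_
  rw [interior_Iic] at hx
  have h_friction := mul_nonpos_of_nonpos_of_nonneg (hα_nonpos x hx.le) (sq_nonneg (r' x))
  have h_potential : 0 ≤ ((m0:ℝ) + m1) / (4 * Real.cosh x ^ 2) * Real.cos (r x) ^ 2 := by
    positivity
  linarith

/-- Derivative formula for V(x) = (1/2)r'(x)² - β(x)cos²(r(x)):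
V'(x) = α(x)r'(x)² - ((m0+m1)/(4cosh²x))cos²(r(x)); for m0 ≥ 2, V is
nonincreasing on (-∞, Z_α]. -/
theorem lyapunov_V_deriv_and_antitone (m0 m1 : ℕ) (hm0 : 1 ≤ m0) (hm1 : 1 ≤ m1)
    (α β : ℝ → ℝ)
    (hα : ∀ x, α x = (1/2) * (((m0:ℝ) + m1 - 2) * Real.tanh x + m1 - m0))
    (hβ : ∀ x, β x = (1/4) * (((m0:ℝ) + m1) * Real.tanh x + m1 - m0))
    (r r' : ℝ → ℝ)
    (hr : ∀ x, HasDerivAt r (r' x) x)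
    (hr' : ∀ x, HasDerivAt r' (α x * r' x - β x * Real.sin (2 * r x)) x) :
    (∀ x, HasDerivAt (fun y => (1/2) * (r' y)^2 - β y * (Real.cos (r y))^2)
      (α x * (r' x)^2 - (((m0:ℝ) + m1) / (4 * (Real.cosh x)^2)) * (Real.cos (r x))^2) x) ∧
    (2 ≤ m0 → AntitoneOn (fun y => (1/2) * (r' y)^2 - β y * (Real.cos (r y))^2)
      (Set.Iic (artanh (((m0:ℝ) - m1) / ((m0:ℝ) + m1 - 2))))) :=
  lyapunov_V_deriv_and_antitone_general m0 m1 α β hα hβ r r' hr hr'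
end
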